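/- arXiv:2012.14973 — 7 statements merged into one kernel-verified Lean document; each statement's English description precedes it below -/
import Mathlib

section
/- The map F : ℝ³ → ℝ³ defined by F(w,x,z) = (k1·δ·x − w, z − (δ+1)·x + (α·δ/k1)·(1−w)·x·(1−3x−z)/(1−x−z)² + β·δ·x·(1−3x−z)/(1−x−z), −2z + 2δ·x + 2(α·δ/k1)·(1−w)·x²/(1−x−z)² + 2β·δ·x²/(1−x−z)) is differentiable at the origin (0,0,0), and its Fréchet derivative at the origin is the linear map given by the matrix [[−1, k1·δ, 0], [0, k̄·δ − (δ+1), 1], [0, 2δ, −2]], where k̄ = (k2 − k1)/k1. -/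
set_option maxHeartbeats 1000000 in
/-- The map F : ℝ³ → ℝ³ given by the right-hand side of the reduced super
compact pairwise SIS model in (w,x,z) is differentiable at the origin, with Fréchet
derivative given by the matrix [[−1, k1·δ, 0], [0, k̄·δ − (δ+1), 1], [0, 2δ, −2]],
where k̄ = (k2 − k1)/k1, α = (k2² − k1·k3)/(k2 − k1²), β = (k3 − k1·k2)/(k2 − k1²) − 1. -/
theorem scpw_jacobian_at_dfe (k1 k2 k3 δ : ℝ) (hk1 : 0 < k1) (hk2 : k1 ^ 2 < k2)
    (hδ : 0 < δ) :
    HasFDerivAt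
      (fun p : Fin 3 → ℝ =>
        (![k1 * δ * p 1 - p 0,
           p 2 - (δ + 1) * p 1 +
             (((k2 ^ 2 - k1 * k3) / (k2 - k1 ^ 2)) * δ / k1) *
               ((1 - p 0) * p 1 * (1 - 3 * p 1 - p 2) / (1 - p 1 - p 2) ^ 2) +
             ((k3 - k1 * k2) / (k2 - k1 ^ 2) - 1) * δ *
               (p 1 * (1 - 3 * p 1 - p 2) / (1 - p 1 - p 2)),
           -2 * p 2 + 2 * δ * p 1 +
             2 * (((k2 ^ 2 - k1 * k3) / (k2 - k1 ^ 2)) * δ / k1) *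
               ((1 - p 0) * p 1 ^ 2 / (1 - p 1 - p 2) ^ 2) +
             2 * ((k3 - k1 * k2) / (k2 - k1 ^ 2) - 1) * δ *
               (p 1 ^ 2 / (1 - p 1 - p 2))] : Fin 3 → ℝ))
      (LinearMap.toContinuousLinearMap
        (Matrix.mulVecLin
          (Matrix.of ![![(-1 : ℝ), k1 * δ, 0],
            ![0, ((k2 - k1) / k1) * δ - (δ + 1), 1],
            ![0, 2 * δ, -2]])))
      0 := by
  have hk1' : k1 ≠ 0 := hk1.ne'
  have hk2' : k2 - k1 ^ 2 ≠ 0 := (sub_pos.mpr hk2).ne'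
  have h0 : HasFDerivAt (fun p : Fin 3 → ℝ => p 0)
      (ContinuousLinearMap.proj 0 : (Fin 3 → ℝ) →L[ℝ] ℝ) 0 :=
    (ContinuousLinearMap.proj (R := ℝ) (φ := fun _ : Fin 3 => ℝ) 0).hasFDerivAt
  have h1 : HasFDerivAt (fun p : Fin 3 → ℝ => p 1)
      (ContinuousLinearMap.proj 1 : (Fin 3 → ℝ) →L[ℝ] ℝ) 0 :=
    (ContinuousLinearMap.proj (R := ℝ) (φ := fun _ : Fin 3 => ℝ) 1).hasFDerivAt
  have h2 : HasFDerivAt (fun p : Fin 3 → ℝ => p 2)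
      (ContinuousLinearMap.proj 2 : (Fin 3 → ℝ) →L[ℝ] ℝ) 0 :=
    (ContinuousLinearMap.proj (R := ℝ) (φ := fun _ : Fin 3 => ℝ) 2).hasFDerivAt
  have hden := ((hasFDerivAt_const (1:ℝ) (0 : Fin 3 → ℝ)).sub h1).sub h2
  have hne : ((fun p : Fin 3 → ℝ => 1 - p 1 - p 2) 0) ≠ 0 := by norm_num
  have hne2 : ((fun p : Fin 3 → ℝ => 1 - p 1 - p 2) 0) ^ 2 ≠ 0 := by norm_num
  have hinv1 := (hasDerivAt_inv hne).comp_hasFDerivAt (0 : Fin 3 → ℝ) hden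
  have hinv2 := (((hasDerivAt_pow 2 ((fun p : Fin 3 → ℝ => 1 - p 1 - p 2) 0)).inv
      hne2).comp_hasFDerivAt (0 : Fin 3 → ℝ) hden)
  have hlin3 := ((hasFDerivAt_const (1:ℝ) (0 : Fin 3 → ℝ)).sub (h1.const_mul 3)).sub h2
  have hnum1 := (((hasFDerivAt_const (1:ℝ) (0 : Fin 3 → ℝ)).sub h0).mul h1).mul hlin3
  have hnum2 := h1.mul hlin3
  have hsq := (hasDerivAt_pow 2 ((0 : Fin 3 → ℝ) 1)).comp_hasFDerivAt (0 : Fin 3 → ℝ) h1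
  have hnum3 := ((hasFDerivAt_const (1:ℝ) (0 : Fin 3 → ℝ)).sub h0).mul hsq
  rw [hasFDerivAt_pi']
  intro i
  fin_cases i
  · convert (h1.const_mul (k1 * δ)).sub h0 using 1
    · funext p
      simp [Function.comp_def, div_eq_mul_inv]
    ext v
    simp [Matrix.mulVec, dotProduct, Fin.sum_univ_three]
    ring
  · convert ((h2.sub (h1.const_mul (δ+1))).add
        ((hnum1.mul hinv2).const_mul (((k2 ^ 2 - k1 * k3) / (k2 - k1 ^ 2)) * δ / k1))).add
        ((hnum2.mul hinv1).const_mul (((k3 - k1 * k2) / (k2 - k1 ^ 2) - 1) * δ)) using 1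
    · funext p
      simp [Function.comp_def, div_eq_mul_inv]
    ext v
    simp [Matrix.mulVec, dotProduct, Fin.sum_univ_three]
    field_simp
    ring
  · convert ((((h2.const_mul (-2)).add (h1.const_mul (2*δ))).add
        ((hnum3.mul hinv2).const_mul (2 * (((k2 ^ 2 - k1 * k3) / (k2 - k1 ^ 2)) * δ / k1)))).add
        ((hsq.mul hinv1).const_mul (2 * ((k3 - k1 * k2) / (k2 - k1 ^ 2) - 1) * δ))) using 1
    · funext p
      simp [Function.comp_def, div_eq_mul_inv]
    ext v
    simp [Matrix.mulVec, dotProduct, Fin.sum_univ_three]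
    ring
end

section
/- If 0 < δ < 1/k̄, then every root of the characteristic polynomial of the 3×3 real matrix M = [[−1, k1·δ, 0], [0, k̄·δ − (δ+1), 1], [0, 2δ, −2]] is real and strictly negative. (Hence the disease-free equilibrium of the super compact pairwise SIS model is linearly stable below the epidemic threshold δc = k1/(k2 − k1) = 1/k̄.) -/
/-!
The matrix is block upper triangular, so its characteristic polynomial is `(X + 1)` times that
of the lower `2 × 2` block. That block has negative trace, determinant `2 (1 - k̄ δ) > 0` below
the threshold, and discriminant `(a - e)² + 4 b c ≥ 0` because its off-diagonal entries `1` and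
`2 δ` have positive product. A real monic quadratic with nonnegative discriminant has only real
roots, and these are negative when its coefficients are positive.
-/

open Polynomial

theorem Matrix.charpoly_of_fin_three_blockTriangular {R : Type*} [CommRing R] (d p a b c e : R) :
    (Matrix.of ![![d, p, 0], ![0, a, b], ![0, c, e]]).charpoly =
      (X - C d) * (X ^ 2 - C (a + e) * X + C (a * e - b * c)) := by
  simp [Matrix.charpoly, Matrix.det_fin_three, map_sub, map_mul]
  ring

theorem Complex.im_eq_zero_of_sq_sub_mul_add_eq_zero {t d : ℝ} (hdisc : 4 * d ≤ t ^ 2) {z : ℂ}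
    (hz : z ^ 2 - t * z + d = 0) : z.im = 0 := by
  have him : z.im * (2 * z.re - t) = 0 := by
    have h := congrArg Complex.im hz
    simp only [sq, sub_im, add_im, mul_im, ofReal_re, ofReal_im, zero_im] at h
    linear_combination h
  have hre : z.re ^ 2 - z.im ^ 2 - t * z.re + d = 0 := by
    simpa [sq] using congrArg Complex.re hz
  rcases mul_eq_zero.mp him with h | h
  · exact h
  · have hzre : z.re = t / 2 := by linarith
    rw [hzre] at hre
    nlinarith [sq_nonneg z.im]

theorem neg_of_sq_sub_mul_add_eq_zero {t d x : ℝ} (ht : t ≤ 0) (hd : 0 < d)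
    (hx : x ^ 2 - t * x + d = 0) : x < 0 := by
  by_contra! h
  nlinarith [sq_nonneg x, mul_nonneg h (neg_nonneg.mpr ht)]

theorem Complex.im_eq_zero_and_re_neg_of_sq_sub_mul_add_eq_zero {t d : ℝ} (ht : t ≤ 0)
    (hd : 0 < d) (hdisc : 4 * d ≤ t ^ 2) {z : ℂ} (hz : z ^ 2 - t * z + d = 0) :
    z.im = 0 ∧ z.re < 0 := by
  have him := im_eq_zero_of_sq_sub_mul_add_eq_zero hdisc hz
  refine ⟨him, neg_of_sq_sub_mul_add_eq_zero ht hd ?_⟩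
  have hz_real : z = z.re := ext rfl (by simp [him])
  rw [hz_real] at hz
  exact_mod_cast hz

theorem scpw_dfe_stable_below_threshold_general (k1 k2 δ : ℝ)
    (hδ : 0 < δ) (hδlt : δ < 1 / ((k2 - k1) / k1)) :
    ∀ z : ℂ,
      ((Matrix.of ![![(-1 : ℝ), k1 * δ, 0],
          ![0, ((k2 - k1) / k1) * δ - (δ + 1), 1],
          ![0, 2 * δ, -2]]).map Complex.ofReal).charpoly.IsRoot z →
        z.im = 0 ∧ z.re < 0 := by
  intro z hz
  set k := (k2 - k1) / k1
  have hkδ : k * δ < 1 := by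
    rcases le_or_gt k 0 with hk | hk
    · nlinarith
    · rwa [lt_one_div hδ hk, lt_div_iff₀ hδ] at hδlt
  rw [show (Complex.ofReal : ℝ → ℂ) = Complex.ofRealHom from rfl, Matrix.charpoly_map,
    Matrix.charpoly_of_fin_three_blockTriangular, IsRoot, eval_map, eval₂_mul, mul_eq_zero] at hz
  rcases hz with hlin | hquad
  · have hz : z = -1 := eq_neg_of_add_eq_zero_left (by simpa using hlin)
    simp [hz]
  · simp only [eval₂_add, eval₂_sub, eval₂_mul, eval₂_X_pow, eval₂_C, eval₂_X] at hquad
    refine Complex.im_eq_zero_and_re_neg_of_sq_sub_mul_add_eq_zero ?_ ?_ ?_ hquad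
    · linarith
    · linarith
    · nlinarith [sq_nonneg (k * δ - δ + 1)]

/-- If 0 < δ < 1/k̄, then every (complex) root of the characteristic polynomial
of M = [[−1, k1·δ, 0], [0, k̄·δ − (δ+1), 1], [0, 2δ, −2]] is real and strictly negative,
where k̄ = (k2 − k1)/k1 with 0 < k1 < k2 (linear stability of the disease-free equilibrium
below the epidemic threshold δc = 1/k̄). -/
theorem scpw_dfe_stable_below_threshold (k1 k2 δ : ℝ) (hk1 : 0 < k1) (hk12 : k1 < k2)
    (hδ : 0 < δ) (hδlt : δ < 1 / ((k2 - k1) / k1)) :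
    ∀ z : ℂ,
      ((Matrix.of ![![(-1 : ℝ), k1 * δ, 0],
          ![0, ((k2 - k1) / k1) * δ - (δ + 1), 1],
          ![0, 2 * δ, -2]]).map Complex.ofReal).charpoly.IsRoot z →
        z.im = 0 ∧ z.re < 0 :=
  scpw_dfe_stable_below_threshold_general k1 k2 δ hδ hδlt
end

section
/- If δ > 1/k̄, then the 3×3 real matrix M = [[−1, k1·δ, 0], [0, k̄·δ − (δ+1), 1], [0, 2δ, −2]] has a real, strictly positive eigenvalue. (Hence the disease-free equilibrium of the super compact pairwise SIS model is unstable above the epidemic threshold δc = k1/(k2 − k1) = 1/k̄.) -/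
/-!
The first column of `M` is `(-1, 0, 0)`, so `det M = -det [[k̄δ - (δ+1), 1], [2δ, -2]] = 2 (k̄δ - 1)`,
which is positive above the threshold. As `M` is `3 × 3`, its characteristic polynomial takes the
value `det (-M) = -det M < 0` at `0`; being monic it tends to `+∞`, so by the intermediate value
theorem it has a positive root.
-/

open Filter Polynomial

namespace Polynomial

theorem Monic.exists_pos_isRoot_of_eval_zero_neg {p : ℝ[X]} (hp : p.Monic) (h0 : p.eval 0 < 0) :
    ∃ r : ℝ, 0 < r ∧ p.IsRoot r := by
  have hdeg : 0 < p.degree := hp.degree_pos.2 fun h => by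
    rw [h, eval_one] at h0
    linarith
  have htop : Tendsto (fun x => p.eval x) atTop atTop :=
    p.tendsto_atTop_of_leadingCoeff_nonneg hdeg (by simp [hp.leadingCoeff])
  obtain ⟨r, hr, hroot⟩ : (0 : ℝ) ∈ (fun x => p.eval x) '' Set.Ici 0 :=
    isPreconnected_Ici.intermediate_value_Ici Set.self_mem_Ici
      (le_principal_iff.2 (Ici_mem_atTop 0))
      p.continuous.continuousOn htop h0.le
  refine ⟨r, lt_of_le_of_ne (Set.mem_Ici.1 hr) ?_, hroot⟩
  rintro rfl
  exact h0.ne hroot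

end Polynomial

namespace Matrix

variable {n : Type*} [Fintype n] [DecidableEq n]

theorem eval_zero_charpoly {R : Type*} [CommRing R] (M : Matrix n n R) :
    M.charpoly.eval 0 = (-1) ^ Fintype.card n * M.det := by
  rw [det_eq_sign_charpoly_coeff, coeff_zero_eq_eval_zero, ← mul_assoc, ← mul_pow]
  simp

theorem exists_pos_isRoot_charpoly_of_odd_card_of_det_pos (M : Matrix n n ℝ)
    (hn : Odd (Fintype.card n)) (hdet : 0 < M.det) : ∃ r : ℝ, 0 < r ∧ M.charpoly.IsRoot r :=
  M.charpoly_monic.exists_pos_isRoot_of_eval_zero_neg <| by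
    rw [eval_zero_charpoly, hn.neg_one_pow]
    linarith

end Matrix

theorem scpw_jacobian_det (kbar δ k1 : ℝ) :
    (Matrix.of ![![(-1 : ℝ), k1 * δ, 0], ![0, kbar * δ - (δ + 1), 1], ![0, 2 * δ, -2]]).det =
      2 * (kbar * δ - 1) := by
  simp [Matrix.det_fin_three]
  ring

/-- If δ > 1/k̄, then M = [[−1, k1·δ, 0], [0, k̄·δ − (δ+1), 1], [0, 2δ, −2]]
has a real, strictly positive eigenvalue (a positive real root of its characteristic
polynomial), where k̄ = (k2 − k1)/k1 with 0 < k1 < k2 (instability of the disease-free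
equilibrium above the epidemic threshold δc = 1/k̄). -/
theorem scpw_dfe_unstable_above_threshold (k1 k2 δ : ℝ) (hk1 : 0 < k1) (hk12 : k1 < k2)
    (hδgt : δ > 1 / ((k2 - k1) / k1)) :
    ∃ r : ℝ, 0 < r ∧
      (Matrix.of ![![(-1 : ℝ), k1 * δ, 0],
          ![0, ((k2 - k1) / k1) * δ - (δ + 1), 1],
          ![0, 2 * δ, -2]]).charpoly.IsRoot r := by
  have hkbar : 0 < (k2 - k1) / k1 := div_pos (sub_pos.2 hk12) hk1
  have hthreshold : 1 < (k2 - k1) / k1 * δ := by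
    rwa [gt_iff_lt, div_lt_iff₀' hkbar] at hδgt
  refine Matrix.exists_pos_isRoot_charpoly_of_odd_card_of_det_pos _ (by decide) ?_
  rw [scpw_jacobian_det]
  linarith
end

section
/- Suppose v, x, y are real numbers with x ≠ 0 and x + y ≠ 0 satisfying the equilibrium equations of the nondimensional super compact pairwise model: 1 − v − σ·(δ/δc)·x = 0, 1 − y − (3 + δ)·x + λ·(δ/δc)·v·x·(y − x)/(x + y)² + μ·(δ/δc)·x·(y − x)/(x + y) = 0, and 2x − 2λ·(δ/δc)·v·x·y/(x + y)² − 2μ·(δ/δc)·x·y/(x + y) = 0. Then, with ε = δc/δ, the pair (x, y) satisfies the polynomial equations P(x,y) = ε²·(1 − y − 2x)·(x + y)² − ε·(δc·x·(x + y)² + λ·x² + μ·x²·(x + y)) + λ·σ·x³ = 0 and Q(x,y) = ε²·(x + y)² − ε·(λ·y + μ·y·(x + y)) + λ·σ·x·y = 0. -/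
/-- If v, x, y (with x ≠ 0, x + y ≠ 0) satisfy the steady-state equations of
the nondimensional super compact pairwise model, then with ε = δc/δ the pair (x,y)
satisfies the polynomial equations P(x,y) = 0 and Q(x,y) = 0. Here
δc = k1/(k2 − k1), σ = k1·δc, λ = α·δc/k1, μ = β·δc with
α = (k2² − k1·k3)/(k2 − k1²), β = (k3 − k1·k2)/(k2 − k1²) − 1. -/
theorem scpw_steady_state_polynomial_system (k1 k2 k3 δ dc sig lam mu v x y : ℝ)
    (hk1 : 0 < k1) (hk2 : k1 ^ 2 < k2) (hk12 : k1 < k2) (hδ : 0 < δ)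
    (hdc : dc = k1 / (k2 - k1))
    (hsig : sig = k1 * dc)
    (hlam : lam = ((k2 ^ 2 - k1 * k3) / (k2 - k1 ^ 2)) * dc / k1)
    (hmu : mu = ((k3 - k1 * k2) / (k2 - k1 ^ 2) - 1) * dc)
    (hx : x ≠ 0) (hxy : x + y ≠ 0)
    (heq1 : 1 - v - sig * (δ / dc) * x = 0)
    (heq2 : 1 - y - (3 + δ) * x + lam * (δ / dc) * (v * x * (y - x) / (x + y) ^ 2) +
        mu * (δ / dc) * (x * (y - x) / (x + y)) = 0)
    (heq3 : 2 * x - 2 * lam * (δ / dc) * (v * x * y / (x + y) ^ 2) -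
        2 * mu * (δ / dc) * (x * y / (x + y)) = 0) :
    (dc / δ) ^ 2 * (1 - y - 2 * x) * (x + y) ^ 2 -
        (dc / δ) * (dc * x * (x + y) ^ 2 + lam * x ^ 2 + mu * x ^ 2 * (x + y)) +
        lam * sig * x ^ 3 = 0 ∧
    (dc / δ) ^ 2 * (x + y) ^ 2 - (dc / δ) * (lam * y + mu * y * (x + y)) +
        lam * sig * x * y = 0 := by
  have hk2k1 : 0 < k2 - k1 := by linarith
  have hdcpos : 0 < dc := by rw [hdc]; positivity
  have hdc0 : dc ≠ 0 := ne_of_gt hdcpos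
  have hδ0 : δ ≠ 0 := ne_of_gt hδ
  field_simp at heq1 heq2 heq3
  have hdxy : dc * (x + y) ≠ 0 := mul_ne_zero hdc0 hxy
  have hA2 : (1 - y - (3 + δ) * x) * dc * (x + y) ^ 2 + lam * δ * v * x * (y - x) +
      mu * δ * x * (y - x) * (x + y) = 0 := by
    rcases mul_eq_zero.mp (show dc * (x + y) * ((1 - y - (3 + δ) * x) * dc * (x + y) ^ 2 +
        lam * δ * v * x * (y - x) + mu * δ * x * (y - x) * (x + y)) = 0 by
      linear_combination dc * (x + y) * heq2) with h | h
    · exact absurd h hdxy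
    · exact h
  have hA3 : x * dc * (x + y) ^ 2 - lam * δ * v * x * y - mu * δ * x * y * (x + y) = 0 := by
    rcases mul_eq_zero.mp (show 2 * (dc * (x + y)) * (x * dc * (x + y) ^ 2 -
        lam * δ * v * x * y - mu * δ * x * y * (x + y)) = 0 by
      linear_combination dc * (x + y) * heq3) with h | h
    · exact absurd h (by simpa using hdxy)
    · exact h
  constructor
  · have h : ((dc / δ) ^ 2 * (1 - y - 2 * x) * (x + y) ^ 2 -
        (dc / δ) * (dc * x * (x + y) ^ 2 + lam * x ^ 2 + mu * x ^ 2 * (x + y)) +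
        lam * sig * x ^ 3) * δ ^ 2 = 0 := by
      field_simp
      linear_combination dc * hA2 + dc * hA3 - (lam * x ^ 2 * δ) * heq1
    rcases mul_eq_zero.mp h with h | h
    · exact h
    · exact absurd h (pow_ne_zero 2 hδ0)
  · have h : x * ((dc / δ) ^ 2 * (x + y) ^ 2 -
        (dc / δ) * (lam * y + mu * y * (x + y)) + lam * sig * x * y) * δ ^ 2 = 0 := by
      field_simp
      linear_combination dc * hA3 - (lam * x * y * δ) * heq1
    rcases mul_eq_zero.mp h with h | h
    · rcases mul_eq_zero.mp h with h | h
      · exact absurd h hx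
      · exact h
    · exact absurd h (pow_ne_zero 2 hδ0)
end

section
/- Assume λ ≠ 0 and σ ≠ 0, and let φ(ε) = (ε² − λ·ε)/(2ε² + (δc + μ)·ε − λ·σ). Then as ε → 0, φ(ε) − (ε/σ + ((δc + μ − σ)/(λ·σ²))·ε²) = O(ε³); that is, the function ε ↦ φ(ε) − ε/σ − ((δc + μ − σ)/(λ·σ²))·ε² is big-O of ε ↦ ε³ in a neighborhood of 0. -/
open Asymptotics Filter

/-- Assume λ ≠ 0 and σ ≠ 0, and let
φ(ε) = (ε² − λε)/(2ε² + (δc+μ)ε − λσ). Then as ε → 0,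
φ(ε) − (ε/σ + ((δc + μ − σ)/(λσ²))·ε²) = O(ε³). Here δc = k1/(k2 − k1), σ = k1·δc,
λ = α·δc/k1, μ = β·δc with α = (k2² − k1·k3)/(k2 − k1²),
β = (k3 − k1·k2)/(k2 − k1²) − 1. -/
theorem scpw_phi_expansion (k1 k2 k3 dc sig lam mu : ℝ)
    (hk1 : 0 < k1) (hk2 : k1 ^ 2 < k2) (hk12 : k1 < k2)
    (hdc : dc = k1 / (k2 - k1))
    (hsig : sig = k1 * dc)
    (hlam : lam = ((k2 ^ 2 - k1 * k3) / (k2 - k1 ^ 2)) * dc / k1)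
    (hmu : mu = ((k3 - k1 * k2) / (k2 - k1 ^ 2) - 1) * dc)
    (hlam0 : lam ≠ 0) (hsig0 : sig ≠ 0) :
    (fun ε : ℝ =>
        (ε ^ 2 - lam * ε) / (2 * ε ^ 2 + (dc + mu) * ε - lam * sig) -
          (ε / sig + ((dc + mu - sig) / (lam * sig ^ 2)) * ε ^ 2)) =O[nhds 0]
      fun ε : ℝ => ε ^ 3 := by

  set c : ℝ := (dc + mu - sig) / (lam * sig ^ 2) with hc
  set D : ℝ → ℝ := fun ε => 2 * ε ^ 2 + (dc + mu) * ε - lam * sig with hD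
  set g : ℝ → ℝ := fun ε => (-(2 / sig) - c * (dc + mu) - 2 * c * ε) / D ε with hg
  have hD0 : D 0 ≠ 0 := by
    simp [hD]
    exact ⟨hlam0, hsig0⟩
  have hDcont : ContinuousAt D 0 := by fun_prop
  have hne : ∀ᶠ ε in nhds (0 : ℝ), D ε ≠ 0 :=
    hDcont.eventually_ne hD0
  have heq : (fun ε : ℝ =>
        (ε ^ 2 - lam * ε) / (2 * ε ^ 2 + (dc + mu) * ε - lam * sig) -
          (ε / sig + ((dc + mu - sig) / (lam * sig ^ 2)) * ε ^ 2)) =ᶠ[nhds 0]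
      fun ε => ε ^ 3 * g ε := by
    filter_upwards [hne] with ε hεD
    have hεD' : 2 * ε ^ 2 + (dc + mu) * ε - lam * sig ≠ 0 := hεD
    simp only [hg, hc, hD]
    generalize hX : 2 * ε ^ 2 + (dc + mu) * ε - lam * sig = X at hεD' ⊢
    field_simp
    rw [← hX]
    ring
  have hgt : Tendsto g (nhds 0) (nhds (g 0)) := by
    apply ContinuousAt.tendsto
    apply ContinuousAt.div (by fun_prop) hDcont hD0
  have hgO : g =O[nhds 0] (fun _ => (1 : ℝ)) := hgt.isBigO_one ℝ
  have : (fun ε : ℝ => ε ^ 3 * g ε) =O[nhds 0] fun ε : ℝ => ε ^ 3 * 1 :=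
    (isBigO_refl (fun ε : ℝ => ε ^ 3) (nhds 0)).mul hgO
  simp only [mul_one] at this
  exact heq.trans_isBigO this
end

section
/- Fix δ > 0 and regard the near-threshold endemic prevalence approximation as a function of the degree-distribution moments: W(k1, k2, k3) = (σ/(λ·σ + μ·δc + μ − δc))·(1 − δc/δ), where δc, σ, λ, μ are the expressions in k1, k2, k3 given below. Then at any point where δ = δc (i.e., evaluated at δ equal to the threshold value determined by k1 and k2) and where k1 − 2k2 + k3 ≠ 0, the partial derivatives are ∂W/∂k1 = −k2/(k1 − 2k2 + k3), ∂W/∂k2 = k1/(k1 − 2k2 + k3), and ∂W/∂k3 = 0. -/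
/-- Epidemic threshold δc = k1/(k2 − k1) as a function of the first two moments. -/
noncomputable def dcF (a b : ℝ) : ℝ := a / (b - a)

/-- σ = k1·δc as a function of the moments. -/
noncomputable def sigF (a b : ℝ) : ℝ := a * dcF a b

/-- λ = α·δc/k1 with α = (k2² − k1·k3)/(k2 − k1²), as a function of the moments. -/
noncomputable def lamF (a b c : ℝ) : ℝ := ((b ^ 2 - a * c) / (b - a ^ 2)) * dcF a b / a

/-- μ = β·δc with β = (k3 − k1·k2)/(k2 − k1²) − 1, as a function of the moments. -/
noncomputable def muF (a b c : ℝ) : ℝ := ((c - a * b) / (b - a ^ 2) - 1) * dcF a b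

/-- The near-threshold endemic prevalence approximation
W = (σ/(λσ + μδc + μ − δc))·(1 − δc/δ) as a function of the moments (k1,k2,k3),
for fixed δ. -/
noncomputable def Wnear (δ a b c : ℝ) : ℝ :=
  (sigF a b / (lamF a b c * sigF a b + muF a b c * dcF a b + muF a b c - dcF a b)) *
    (1 - dcF a b / δ)

/-- Fix δ > 0. At any point (k1,k2,k3) where δ = δc(k1,k2) and
k1 − 2k2 + k3 ≠ 0, the partial derivatives of the near-threshold endemic prevalence
approximation W are ∂W/∂k1 = −k2/(k1 − 2k2 + k3), ∂W/∂k2 = k1/(k1 − 2k2 + k3), and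
∂W/∂k3 = 0. -/
theorem scpw_near_threshold_sensitivities (δ k1 k2 k3 : ℝ) (hδ : 0 < δ)
    (hk1 : 0 < k1) (hk2 : k1 ^ 2 < k2) (hk12 : k1 < k2)
    (hthr : δ = dcF k1 k2) (hden : k1 - 2 * k2 + k3 ≠ 0) :
    deriv (fun t => Wnear δ t k2 k3) k1 = -k2 / (k1 - 2 * k2 + k3) ∧
    deriv (fun t => Wnear δ k1 t k3) k2 = k1 / (k1 - 2 * k2 + k3) ∧
    deriv (fun t => Wnear δ k1 k2 t) k3 = 0 := by
  subst hthr
  have hne1 : k2 - k1 ≠ 0 := sub_ne_zero.mpr (ne_of_gt hk12)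
  have hne2 : k2 - k1 ^ 2 ≠ 0 := sub_ne_zero.mpr (ne_of_gt hk2)
  have hne3 : k1 ≠ 0 := ne_of_gt hk1
  have hδ0 : dcF k1 k2 ≠ 0 := ne_of_gt hδ
  have hG0 : 1 - dcF k1 k2 / dcF k1 k2 = 0 := by field_simp; norm_num
  have hDenval : lamF k1 k2 k3 * sigF k1 k2 + muF k1 k2 k3 * dcF k1 k2 + muF k1 k2 k3
      - dcF k1 k2 = k1 * (k1 - 2 * k2 + k3) / (k2 - k1) ^ 2 := by
    simp only [lamF, muF, sigF, dcF]; field_simp; ring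
  have hDen_ne : lamF k1 k2 k3 * sigF k1 k2 + muF k1 k2 k3 * dcF k1 k2 + muF k1 k2 k3
      - dcF k1 k2 ≠ 0 := by
    rw [hDenval]; exact div_ne_zero (mul_ne_zero hne3 hden) (pow_ne_zero _ hne1)
  have hFval : sigF k1 k2 / (lamF k1 k2 k3 * sigF k1 k2 + muF k1 k2 k3 * dcF k1 k2
      + muF k1 k2 k3 - dcF k1 k2) = k1 * (k2 - k1) / (k1 - 2 * k2 + k3) := by
    rw [hDenval]; simp only [sigF, dcF]; field_simp
  refine ⟨?_, ?_, ?_⟩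
  · -- ∂/∂k1
    have hdcdiff : DifferentiableAt ℝ (fun t => dcF t k2) k1 := by
      simp only [dcF]
      exact DifferentiableAt.div (by fun_prop) (by fun_prop) hne1
    have hsdiff : DifferentiableAt ℝ (fun t => sigF t k2) k1 := by
      simp only [sigF]; exact differentiableAt_fun_id.mul hdcdiff
    have hldiff : DifferentiableAt ℝ (fun t => lamF t k2 k3) k1 := by
      simp only [lamF]
      have hq : DifferentiableAt ℝ (fun t : ℝ => (k2 ^ 2 - t * k3) / (k2 - t ^ 2)) k1 :=
        DifferentiableAt.div (c := fun t : ℝ => k2 ^ 2 - t * k3)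
          (d := fun t : ℝ => k2 - t ^ 2) (by fun_prop) (by fun_prop) hne2
      exact (hq.mul hdcdiff).div (by fun_prop) hne3
    have hmdiff : DifferentiableAt ℝ (fun t => muF t k2 k3) k1 := by
      simp only [muF]
      have hq : DifferentiableAt ℝ (fun t : ℝ => (k3 - t * k2) / (k2 - t ^ 2)) k1 :=
        DifferentiableAt.div (c := fun t : ℝ => k3 - t * k2)
          (d := fun t : ℝ => k2 - t ^ 2) (by fun_prop) (by fun_prop) hne2
      exact (hq.sub (by fun_prop)).mul hdcdiff
    have hFd : DifferentiableAt ℝ (fun t => sigF t k2 /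
        (lamF t k2 k3 * sigF t k2 + muF t k2 k3 * dcF t k2 + muF t k2 k3 - dcF t k2)) k1 :=
      hsdiff.div ((((hldiff.mul hsdiff).add (hmdiff.mul hdcdiff)).add hmdiff).sub hdcdiff)
        hDen_ne
    have hdc' : HasDerivAt (fun t => dcF t k2)
        ((1 * (k2 - k1) - k1 * (0 - 1)) / (k2 - k1) ^ 2) k1 := by
      simp only [dcF]
      exact (hasDerivAt_id k1).div ((hasDerivAt_const k1 k2).sub (hasDerivAt_id k1)) hne1
    have hGd : HasDerivAt (fun t => 1 - dcF t k2 / dcF k1 k2)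
        (-((1 * (k2 - k1) - k1 * (0 - 1)) / (k2 - k1) ^ 2 / dcF k1 k2)) k1 :=
      (hdc'.div_const _).const_sub 1
    have hW : (fun t => Wnear (dcF k1 k2) t k2 k3) = fun t => (sigF t k2 /
        (lamF t k2 k3 * sigF t k2 + muF t k2 k3 * dcF t k2 + muF t k2 k3 - dcF t k2)) *
        (1 - dcF t k2 / dcF k1 k2) := rfl
    rw [hW, deriv_fun_mul hFd hGd.differentiableAt, hG0, mul_zero, zero_add, hGd.deriv, hFval]
    rw [show dcF k1 k2 = k1 / (k2 - k1) from rfl]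
    field_simp
    ring
  · -- ∂/∂k2
    have hdcdiff : DifferentiableAt ℝ (fun t => dcF k1 t) k2 := by
      simp only [dcF]
      exact DifferentiableAt.div (by fun_prop) (by fun_prop) hne1
    have hsdiff : DifferentiableAt ℝ (fun t => sigF k1 t) k2 := by
      simp only [sigF]; exact (differentiableAt_const _).mul hdcdiff
    have hldiff : DifferentiableAt ℝ (fun t => lamF k1 t k3) k2 := by
      simp only [lamF]
      have hq : DifferentiableAt ℝ (fun t : ℝ => (t ^ 2 - k1 * k3) / (t - k1 ^ 2)) k2 :=
        DifferentiableAt.div (c := fun t : ℝ => t ^ 2 - k1 * k3)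
          (d := fun t : ℝ => t - k1 ^ 2) (by fun_prop) (by fun_prop) hne2
      exact (hq.mul hdcdiff).div (by fun_prop) hne3
    have hmdiff : DifferentiableAt ℝ (fun t => muF k1 t k3) k2 := by
      simp only [muF]
      have hq : DifferentiableAt ℝ (fun t : ℝ => (k3 - k1 * t) / (t - k1 ^ 2)) k2 :=
        DifferentiableAt.div (c := fun t : ℝ => k3 - k1 * t)
          (d := fun t : ℝ => t - k1 ^ 2) (by fun_prop) (by fun_prop) hne2
      exact (hq.sub (by fun_prop)).mul hdcdiff
    have hFd : DifferentiableAt ℝ (fun t => sigF k1 t /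
        (lamF k1 t k3 * sigF k1 t + muF k1 t k3 * dcF k1 t + muF k1 t k3 - dcF k1 t)) k2 :=
      hsdiff.div ((((hldiff.mul hsdiff).add (hmdiff.mul hdcdiff)).add hmdiff).sub hdcdiff)
        hDen_ne
    have hdc' : HasDerivAt (fun t => dcF k1 t)
        ((0 * (k2 - k1) - k1 * (1 - 0)) / (k2 - k1) ^ 2) k2 := by
      simp only [dcF]
      exact (hasDerivAt_const k2 k1).div ((hasDerivAt_id k2).sub (hasDerivAt_const k2 k1)) hne1
    have hGd : HasDerivAt (fun t => 1 - dcF k1 t / dcF k1 k2)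
        (-((0 * (k2 - k1) - k1 * (1 - 0)) / (k2 - k1) ^ 2 / dcF k1 k2)) k2 :=
      (hdc'.div_const _).const_sub 1
    have hW : (fun t => Wnear (dcF k1 k2) k1 t k3) = fun t => (sigF k1 t /
        (lamF k1 t k3 * sigF k1 t + muF k1 t k3 * dcF k1 t + muF k1 t k3 - dcF k1 t)) *
        (1 - dcF k1 t / dcF k1 k2) := rfl
    rw [hW, deriv_fun_mul hFd hGd.differentiableAt, hG0, mul_zero, zero_add, hGd.deriv, hFval]
    rw [show dcF k1 k2 = k1 / (k2 - k1) from rfl]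
    field_simp
    ring
  · simp only [Wnear, hG0, mul_zero]
    exact deriv_const _ _
end

section
/- Fix δ > 0 and regard the far-from-threshold endemic prevalence approximation as a function of the degree-distribution moments: W(k1, k2, k3) = 1 + ((δc + μ − σ)/(λ·σ))·(δc/δ), where δc, σ, λ, μ are the expressions in k1, k2, k3 given below. Then at any point where k2² − k1·k3 ≠ 0, the partial derivatives are ∂W/∂k1 = (k3² + 3k1²·k2² − 2(k1³·k3 + k2³))/((k2² − k3·k1)²·δ), ∂W/∂k2 = −2(k1² − k2)·(k1·k2 − k3)/((k2² − k3·k1)²·δ), and ∂W/∂k3 = (k1² − k2)²/((k2² − k3·k1)²·δ). -/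
/-- The far-from-threshold endemic prevalence approximation
W = 1 + ((δc + μ − σ)/(λσ))·(δc/δ) as a function of the moments (k1,k2,k3),
for fixed δ. -/
noncomputable def Wfar (δ a b c : ℝ) : ℝ :=
  1 + ((dcF a b + muF a b c - sigF a b) / (lamF a b c * sigF a b)) * (dcF a b / δ)

/-- Simplified closed form of `Wfar` wherever the denominators are nonzero. -/
lemma Wfar_eq (δ a b c : ℝ) (hδ : δ ≠ 0) (ha : a ≠ 0) (hba : b - a ≠ 0)
    (hba2 : b - a ^ 2 ≠ 0) (hd : b ^ 2 - a * c ≠ 0) :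
    Wfar δ a b c = 1 + (a ^ 3 - 2 * a * b + c) / ((b ^ 2 - a * c) * δ) := by
  simp only [Wfar, dcF, sigF, lamF, muF]
  field_simp
  ring

/-- Fix δ > 0. At any point (k1,k2,k3) where k2² − k1·k3 ≠ 0, the partial
derivatives of the far-from-threshold endemic prevalence approximation W are
∂W/∂k1 = (k3² + 3k1²k2² − 2(k1³k3 + k2³))/((k2² − k3k1)²·δ),
∂W/∂k2 = −2(k1² − k2)(k1k2 − k3)/((k2² − k3k1)²·δ), and
∂W/∂k3 = (k1² − k2)²/((k2² − k3k1)²·δ). -/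
theorem scpw_far_threshold_sensitivities (δ k1 k2 k3 : ℝ) (hδ : 0 < δ)
    (hk1 : 0 < k1) (hk2 : k1 ^ 2 < k2) (hk12 : k1 < k2)
    (hden : k2 ^ 2 - k1 * k3 ≠ 0) :
    deriv (fun t => Wfar δ t k2 k3) k1 =
      (k3 ^ 2 + 3 * k1 ^ 2 * k2 ^ 2 - 2 * (k1 ^ 3 * k3 + k2 ^ 3)) /
        ((k2 ^ 2 - k3 * k1) ^ 2 * δ) ∧
    deriv (fun t => Wfar δ k1 t k3) k2 =
      -(2 * (k1 ^ 2 - k2) * (k1 * k2 - k3)) / ((k2 ^ 2 - k3 * k1) ^ 2 * δ) ∧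
    deriv (fun t => Wfar δ k1 k2 t) k3 =
      (k1 ^ 2 - k2) ^ 2 / ((k2 ^ 2 - k3 * k1) ^ 2 * δ) := by
  have hδ' : δ ≠ 0 := ne_of_gt hδ
  have hden' : k2 ^ 2 - k3 * k1 ≠ 0 := by rw [mul_comm]; exact hden
  have ha : k1 ≠ 0 := ne_of_gt hk1
  have hba : k2 - k1 ≠ 0 := sub_ne_zero.mpr hk12.ne'
  have hba2 : k2 - k1 ^ 2 ≠ 0 := sub_ne_zero.mpr hk2.ne'
  refine ⟨?_, ?_, ?_⟩
  · -- ∂/∂k1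
    have heq : (fun t => Wfar δ t k2 k3) =ᶠ[nhds k1]
        (fun t => 1 + (t ^ 3 - 2 * t * k2 + k3) / ((k2 ^ 2 - t * k3) * δ)) := by
      have e1 : ∀ᶠ t in nhds k1, t ≠ 0 := eventually_ne_nhds ha
      have e2 : ∀ᶠ t in nhds k1, k2 - t ≠ 0 :=
        ((continuous_const.sub continuous_id).continuousAt).eventually_ne hba
      have e3 : ∀ᶠ t in nhds k1, k2 - t ^ 2 ≠ 0 :=
        ((continuous_const.sub (continuous_pow 2)).continuousAt).eventually_ne hba2
      have e4 : ∀ᶠ t in nhds k1, k2 ^ 2 - t * k3 ≠ 0 :=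
        ((continuous_const.sub (continuous_id.mul continuous_const)).continuousAt).eventually_ne
          hden
      filter_upwards [e1, e2, e3, e4] with t h1 h2 h3 h4
      exact Wfar_eq δ t k2 k3 hδ' h1 h2 h3 h4
    rw [heq.deriv_eq]
    have hdnz : (k2 ^ 2 - k1 * k3) * δ ≠ 0 := mul_ne_zero hden hδ'
    have hn : HasDerivAt (fun t : ℝ => t ^ 3 - 2 * t * k2 + k3)
        (3 * k1 ^ 2 - 2 * k2) k1 := by
      have h := (((hasDerivAt_pow 3 k1).sub
        (((hasDerivAt_id k1).const_mul 2).mul_const k2)).add_const k3)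
      refine h.congr_deriv ?_; push_cast; ring
    have hd : HasDerivAt (fun t : ℝ => (k2 ^ 2 - t * k3) * δ) (-k3 * δ) k1 := by
      have h := ((((hasDerivAt_id k1).mul_const k3).const_sub (k2 ^ 2)).mul_const δ)
      refine h.congr_deriv ?_; ring
    have := ((hn.div hd hdnz).const_add 1).deriv
    erw [this]
    field_simp
    ring
  · -- ∂/∂k2
    have heq : (fun t => Wfar δ k1 t k3) =ᶠ[nhds k2]
        (fun t => 1 + (k1 ^ 3 - 2 * k1 * t + k3) / ((t ^ 2 - k1 * k3) * δ)) := by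
      have e2 : ∀ᶠ t in nhds k2, t - k1 ≠ 0 :=
        ((continuous_id.sub continuous_const).continuousAt).eventually_ne hba
      have e3 : ∀ᶠ t in nhds k2, t - k1 ^ 2 ≠ 0 :=
        ((continuous_id.sub continuous_const).continuousAt).eventually_ne hba2
      have e4 : ∀ᶠ t in nhds k2, t ^ 2 - k1 * k3 ≠ 0 :=
        (((continuous_pow 2).sub continuous_const).continuousAt).eventually_ne hden
      filter_upwards [e2, e3, e4] with t h2 h3 h4
      exact Wfar_eq δ k1 t k3 hδ' ha h2 h3 h4
    rw [heq.deriv_eq]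
    have hdnz : (k2 ^ 2 - k1 * k3) * δ ≠ 0 := mul_ne_zero hden hδ'
    have hn : HasDerivAt (fun t : ℝ => k1 ^ 3 - 2 * k1 * t + k3) (-(2 * k1)) k2 := by
      have h := ((((hasDerivAt_id k2).const_mul (2 * k1)).const_sub (k1 ^ 3)).add_const k3)
      refine h.congr_deriv ?_; ring
    have hd : HasDerivAt (fun t : ℝ => (t ^ 2 - k1 * k3) * δ) (2 * k2 * δ) k2 := by
      have h := (((hasDerivAt_pow 2 k2).sub_const (k1 * k3)).mul_const δ)
      refine h.congr_deriv ?_; push_cast; ring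
    have := ((hn.div hd hdnz).const_add 1).deriv
    erw [this]
    field_simp
    ring
  · -- ∂/∂k3
    have heq : (fun t => Wfar δ k1 k2 t) =ᶠ[nhds k3]
        (fun t => 1 + (k1 ^ 3 - 2 * k1 * k2 + t) / ((k2 ^ 2 - k1 * t) * δ)) := by
      have e4 : ∀ᶠ t in nhds k3, k2 ^ 2 - k1 * t ≠ 0 :=
        ((continuous_const.sub (continuous_const.mul continuous_id)).continuousAt).eventually_ne
          hden
      filter_upwards [e4] with t h4
      exact Wfar_eq δ k1 k2 t hδ' ha hba hba2 h4
    rw [heq.deriv_eq]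
    have hdnz : (k2 ^ 2 - k1 * k3) * δ ≠ 0 := mul_ne_zero hden hδ'
    have hn : HasDerivAt (fun t : ℝ => k1 ^ 3 - 2 * k1 * k2 + t) 1 k3 := by
      have h := ((hasDerivAt_id k3).const_add (k1 ^ 3 - 2 * k1 * k2))
      exact h
    have hd : HasDerivAt (fun t : ℝ => (k2 ^ 2 - k1 * t) * δ) (-k1 * δ) k3 := by
      have h := ((((hasDerivAt_id k3).const_mul k1).const_sub (k2 ^ 2)).mul_const δ)
      refine h.congr_deriv ?_; ring
    have := ((hn.div hd hdnz).const_add 1).deriv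
    erw [this]
    field_simp
    ring
end
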